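/- arXiv:2503.17881 — 5 statements merged into one kernel-verified Lean document; each statement's English description precedes it below -/
import Mathlib

section
/- An element s ∈ S is not in the minimal neighborhood of a local map μ : A^S → A if and only if μ is constant on each class [x]_s; equivalently, the minimal neighborhood of μ equals the set of essential elements of S, i.e., those s for which there exist z, w ∈ A^S agreeing on S \ {s} with μ(z) ≠ μ(w). -/
/-- `s` is not essential for `μ` iff `μ` is constant on each class `[x]_s`;
moreover the set of essential elements is a neighborhood of `μ` (μ factors
through it) and is contained in every neighborhood of `μ`, i.e. it is the
(unique) minimal neighborhood. -/
theorem stmt1 (A S : Type*) [Fintype A] [Fintype S] [DecidableEq S]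
    (hA : 2 ≤ Fintype.card A) (μ : (S → A) → A) :
    (∀ s : S,
      (¬ ∃ z w : S → A, (∀ t, t ≠ s → z t = w t) ∧ μ z ≠ μ w) ↔
      (∀ z w : S → A, (∀ t, t ≠ s → z t = w t) → μ z = μ w)) ∧
    (∃ ν : ({s : S // ∃ z w : S → A, (∀ t, t ≠ s → z t = w t) ∧ μ z ≠ μ w} → A) → A,
      ∀ x : S → A, μ x = ν (fun t => x t.1)) ∧
    (∀ S₀ : Set S,
      (∃ ν : (S₀ → A) → A, ∀ x : S → A, μ x = ν (fun t => x t.1)) →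
      {s : S | ∃ z w : S → A, (∀ t, t ≠ s → z t = w t) ∧ μ z ≠ μ w} ⊆ S₀) := by
  classical
  have h1 : ∀ s : S, (¬ ∃ z w : S → A, (∀ t, t ≠ s → z t = w t) ∧ μ z ≠ μ w) ↔
      (∀ z w : S → A, (∀ t, t ≠ s → z t = w t) → μ z = μ w) := by
    intro s
    constructor
    · intro h z w hzw
      by_contra hne
      exact h ⟨z, w, hzw, hne⟩
    · rintro h ⟨z, w, hzw, hne⟩
      exact hne (h z w hzw)
  refine ⟨h1, ?_, ?_⟩
  · have hA' : Nonempty A := Fintype.card_pos_iff.mp (by omega)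
    obtain ⟨d⟩ := hA'
    have key : ∀ (D : Finset S) (x y : S → A), (∀ s, x s ≠ y s → s ∈ D) →
        (∀ s, (∃ z w : S → A, (∀ t, t ≠ s → z t = w t) ∧ μ z ≠ μ w) → x s = y s) →
        μ x = μ y := by
      intro D
      induction D using Finset.induction_on with
      | empty =>
        intro x y hD _
        have : x = y := funext fun s => by
          by_contra hne; exact absurd (hD s hne) (Finset.notMem_empty s)
        rw [this]
      | @insert a D' ha ih =>
        intro x y hD hE
        by_cases haE : ∃ z w : S → A, (∀ t, t ≠ a → z t = w t) ∧ μ z ≠ μ w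
        · -- a essential, so x a = y a; differences lie in D'
          apply ih x y ?_ hE
          intro s hs
          have := hD s hs
          rcases Finset.mem_insert.mp this with h | h
          · exact absurd (hE a haE) (h ▸ hs)
          · exact h
        · set x' := Function.update x a (y a) with hx'
          have step : μ x = μ x' := by
            by_contra hne
            exact haE ⟨x, x', fun t ht => (Function.update_of_ne ht _ _).symm, hne⟩
          rw [step]
          apply ih x' y
          · intro s hs
            by_cases hsa : s = a
            · subst hsa
              simp [hx', Function.update_self] at hs
            · have : x' s = x s := Function.update_of_ne hsa _ _
              rw [this] at hs
              rcases Finset.mem_insert.mp (hD s hs) with h | h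
              · exact absurd h hsa
              · exact h
          · intro s hsE
            by_cases hsa : s = a
            · subst hsa; simp [hx', Function.update_self]
            · rw [hx', Function.update_of_ne hsa]
              exact hE s hsE
    refine ⟨fun g => μ (fun t =>
      if h : ∃ z w : S → A, (∀ u, u ≠ t → z u = w u) ∧ μ z ≠ μ w then g ⟨t, h⟩ else d),
      fun x => ?_⟩
    apply key Finset.univ
    · intro s _; exact Finset.mem_univ s
    · intro s hs
      simp [hs]
  · rintro S₀ ⟨ν, hν⟩ s hs
    obtain ⟨z, w, hzw, hne⟩ := hs
    by_contra hsS₀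
    apply hne
    rw [hν z, hν w]
    congr 1
    funext t
    exact hzw t.1 (fun h => hsS₀ (h ▸ t.2))
end

section
/- A subset T ⊆ S contains the set of essential elements of a local map μ : A^S → A if and only if μ factors through the restriction map (S → A) → (T → A), i.e., there exists ν : (T → A) → A with μ(x) = ν(x|_T) for all x. -/
/-- A subset `T ⊆ S` contains all essential elements of `μ` iff `μ` factors
through the restriction map `(S → A) → (T → A)`. -/
theorem stmt3 (A S : Type*) [Fintype A] [Fintype S] [DecidableEq S] [Nonempty A]
    (μ : (S → A) → A) (T : Set S) :
    {s : S | ∃ z w : S → A, (∀ t, t ≠ s → z t = w t) ∧ μ z ≠ μ w} ⊆ T ↔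
    ∃ ν : (T → A) → A, ∀ x : S → A, μ x = ν (fun t => x t.1) := by
  classical
  constructor
  · intro hT
    set ext : (T → A) → S → A := fun y s => if h : s ∈ T then y ⟨s, h⟩ else Classical.arbitrary A with hext
    refine ⟨fun y => μ (ext y), fun x => ?_⟩
    have key : ∀ n (x y : S → A), (Finset.univ.filter (fun s => x s ≠ y s)).card ≤ n →
        (∀ t ∈ T, x t = y t) → μ x = μ y := by
      intro n
      induction n with
      | zero =>
        intro x y hc hagree
        have : x = y := by
          funext s
          by_contra hs
          have hm : s ∈ Finset.univ.filter (fun s => x s ≠ y s) := by simp [hs]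
          have := Finset.card_pos.mpr ⟨s, hm⟩
          omega
        rw [this]
      | succ n ih =>
        intro x y hc hagree
        by_cases hxy : x = y
        · rw [hxy]
        · obtain ⟨s, hs⟩ := Function.ne_iff.mp hxy
          have hsT : s ∉ T := fun h => hs (hagree s h)
          have hsns : s ∉ {s : S | ∃ z w : S → A, (∀ t, t ≠ s → z t = w t) ∧ μ z ≠ μ w} :=
            fun h => hsT (hT h)
          have h1 : μ x = μ (Function.update x s (y s)) := by
            by_contra hne
            exact hsns ⟨x, Function.update x s (y s),
              fun t ht => (Function.update_of_ne ht _ _).symm, hne⟩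
          rw [h1]
          apply ih
          · have hsub : (Finset.univ.filter (fun t => Function.update x s (y s) t ≠ y t)) ⊆
                (Finset.univ.filter (fun t => x t ≠ y t)).erase s := by
              intro t ht
              simp only [Finset.mem_filter, Finset.mem_erase, Finset.mem_univ, true_and] at *
              rcases eq_or_ne t s with rfl | hts
              · simp at ht
              · exact ⟨hts, by rwa [Function.update_of_ne hts] at ht⟩
            have hm : s ∈ Finset.univ.filter (fun t => x t ≠ y t) := by simp [hs]
            have := Finset.card_le_card hsub
            rw [Finset.card_erase_of_mem hm] at this
            omega
          · intro t htT
            rw [Function.update_of_ne (by rintro rfl; exact hsT htT)]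
            exact hagree t htT
    apply key (Fintype.card S) x (ext (fun t => x t.1))
    · exact (Finset.card_filter_le _ _).trans (by simp)
    · intro t ht; simp [hext, ht]
  · rintro ⟨ν, hν⟩ s hs
    obtain ⟨z, w, hzw, hne⟩ := hs
    by_contra hsT
    apply hne
    rw [hν z, hν w]
    congr 1
    funext t
    exact hzw t.1 (fun h => hsT (h ▸ t.2))
end

section
/- Let μ : A^S → A with e ∈ S and |S| ≥ 2. If |A| does not divide α(μ), then the minimal neighborhood of μ is all of S (every element of S is essential for μ). -/
/-!
If `s` is not essential, `μ` factors through the restriction `z ↦ z|_{S \ {s}}`, and the set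
`{z | μ z ≠ z e}` splits into the fibres of this restriction, each a copy of `A`. If `s ≠ e`,
membership does not depend on `z s`, so every fibre lies inside or outside the set entirely and
`|A|` divides `α(μ)`. If `s = e`, every fibre contributes exactly `|A| - 1` points, so
`α(μ) = |A|^(|S|-1) (|A| - 1)`, again a multiple of `|A|` because `|S| ≥ 2`.
-/

open Equiv

section

variable {S A : Type*} [DecidableEq S]

theorem exists_factor_restrict_of_forall_agree {Y : Type*} [Nonempty A] {s : S}
    {μ : (S → A) → Y} (hμ : ∀ z w : S → A, (∀ t, t ≠ s → z t = w t) → μ z = μ w) :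
    ∃ c : ({t // t ≠ s} → A) → Y, ∀ z, μ z = c fun t => z t := by
  refine ⟨fun f => μ ((funSplitAt s A).symm (Classical.arbitrary A, f)), fun z => hμ _ _ ?_⟩
  intro t ht
  simp [ht]

theorem Nat.card_subtype_restrict (s : S) (Q : ({t // t ≠ s} → A) → Prop) :
    Nat.card {z : S → A // Q fun t => z t} = Nat.card A * Nat.card {f // Q f} := by
  rw [← Nat.card_prod]
  exact Nat.card_congr <| ((funSplitAt s A).subtypeEquiv fun z => Iff.rfl).trans <|
    ((prodComm _ _).subtypeEquiv fun _ => Iff.rfl).trans <|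
      prodSubtypeFstEquivSubtypeProd.trans (prodComm _ _)

theorem Nat.card_subtype_restrict_ne_apply [Finite S] [Finite A] (s : S)
    (c : ({t // t ≠ s} → A) → A) :
    Nat.card {z : S → A // c (fun t => z t) ≠ z s} =
      Nat.card ({t // t ≠ s} → A) * (Nat.card A - 1) := by
  have := Fintype.ofFinite A
  have := Fintype.ofFinite ({t // t ≠ s} → A)
  have hfiber (f : {t // t ≠ s} → A) : Nat.card {a // c f ≠ a} = Nat.card A - 1 := by
    classical
    rw [Nat.card_eq_fintype_card, Fintype.card_subtype_compl, Fintype.card_subtype_eq',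
      Nat.card_eq_fintype_card]
  calc Nat.card {z : S → A // c (fun t => z t) ≠ z s}
      = Nat.card (Σ f : {t // t ≠ s} → A, {a // c f ≠ a}) :=
        Nat.card_congr <| ((funSplitAt s A).subtypeEquiv fun z => Iff.rfl).trans <|
          ((prodComm _ _).subtypeEquiv fun _ => Iff.rfl).trans
            (subtypeProdEquivSigmaSubtype fun f a => c f ≠ a)
    _ = _ := by
      rw [Nat.card_sigma, Finset.sum_congr rfl fun f _ => hfiber f, Finset.sum_const,
        Finset.card_univ, smul_eq_mul, ← Nat.card_eq_fintype_card]

end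

/-- If `|A|` does not divide `α(μ)` and `|S| ≥ 2`, then every element of `S`
is essential for `μ`, i.e. the minimal neighborhood of `μ` is `S`. -/
theorem stmt10 (A S : Type*) [Fintype A] [Fintype S] [DecidableEq S]
    (hA : 2 ≤ Fintype.card A) (hS : 2 ≤ Fintype.card S) (e : S)
    (μ : (S → A) → A)
    (hdvd : ¬ (Fintype.card A ∣ Nat.card {z : S → A // μ z ≠ z e})) :
    ∀ s : S, ∃ z w : S → A, (∀ t, t ≠ s → z t = w t) ∧ μ z ≠ μ w := by
  intro s
  by_contra! hμ
  have : Nonempty A := Fintype.card_pos_iff.mp (by omega)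
  obtain ⟨c, hc⟩ := exists_factor_restrict_of_forall_agree hμ
  simp only [hc, ← Nat.card_eq_fintype_card] at hdvd
  apply hdvd
  rcases eq_or_ne e s with rfl | hes
  · have : Nonempty {t // t ≠ e} := nonempty_subtype.mpr (Fintype.exists_ne_of_one_lt_card hS e)
    rw [Nat.card_subtype_restrict_ne_apply, Nat.card_fun]
    exact dvd_mul_of_dvd_left (dvd_pow_self _ Nat.card_pos.ne') _
  · exact Nat.card_subtype_restrict s (fun f => c f ≠ f ⟨e, hes⟩) ▸ dvd_mul_right _ _
end

section
/- For every k with 0 < k < |A|^{|S|}, there exists a local map μ : A^S → A whose minimal neighborhood is all of S and whose activity value α(μ) equals k. -/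
/-!
Fix a derangement `σ` of `A` and a set `T` of `k` configurations, and let `μ` apply `σ` to the
`e`-th coordinate on `T` and return the `e`-th coordinate elsewhere, so that `α(μ) = |T|`.
A coordinate `s ≠ e` is essential for `μ` as soon as some edge of the Hamming graph in direction
`s` has exactly one end in `T`, and `e` is essential as soon as some edge in direction `e` has both
ends on the same side of `T`. For `k + |S| ≤ |A|^|S|` such a `T` is obtained by putting the constant
configuration `o` into `T` and keeping out its neighbours `o[s ↦ a₁]` (`s ≠ e`) together with one
`e`-neighbour of one of them; for larger `k` take the complement of such a set of size
`|A|^|S| - k`, both properties being invariant under complementation.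
-/

open Finset Function

section

lemma exists_perm_forall_apply_ne {A : Type*} [Fintype A] (hA : 2 ≤ Fintype.card A) :
    ∃ σ : Equiv.Perm A, ∀ b, σ b ≠ b := by
  obtain ⟨n, hn⟩ : ∃ n, Fintype.card A = n + 2 := ⟨_, (Nat.sub_add_cancel hA).symm⟩
  let f : A ≃ Fin (n + 2) := (Fintype.equivFin A).trans (finCongr hn)
  refine ⟨f.symm.permCongr (finRotate (n + 2)), fun b h => ?_⟩
  rw [Equiv.permCongr_apply, Equiv.symm_symm, Equiv.symm_apply_eq, finRotate_apply,
    add_eq_left, Fin.one_eq_zero_iff] at h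
  omega

variable {S A : Type*}

def CutsEdge (T : Finset (S → A)) (s : S) : Prop :=
  ∃ z w : S → A, (∀ t, t ≠ s → z t = w t) ∧ (z ∈ T ↔ w ∉ T)

def SparesEdge (T : Finset (S → A)) (s : S) : Prop :=
  ∃ z w : S → A, (∀ t, t ≠ s → z t = w t) ∧ z s ≠ w s ∧ (z ∈ T ↔ w ∈ T)

section Hamming

variable [Fintype S] [DecidableEq S] [Fintype A] [DecidableEq A]

lemma CutsEdge.compl {T : Finset (S → A)} {s : S} (h : CutsEdge T s) : CutsEdge Tᶜ s := by
  obtain ⟨z, w, hzw, hT⟩ := h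
  exact ⟨z, w, hzw, by simp only [mem_compl]; tauto⟩

lemma SparesEdge.compl {T : Finset (S → A)} {s : S} (h : SparesEdge T s) :
    SparesEdge Tᶜ s := by
  obtain ⟨z, w, hzw, hs, hT⟩ := h
  exact ⟨z, w, hzw, hs, by simp only [mem_compl]; tauto⟩

lemma exists_card_eq_cutsEdge_sparesEdge_of_add_card_le {e : S} {k : ℕ}
    (hA : 2 ≤ Fintype.card A) (hS : 2 ≤ Fintype.card S) (hk0 : 0 < k)
    (hk : k + Fintype.card S ≤ Fintype.card (S → A)) :
    ∃ T : Finset (S → A), #T = k ∧ (∀ s, s ≠ e → CutsEdge T s) ∧ SparesEdge T e := by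
  obtain ⟨a₀, a₁, ha⟩ := Fintype.exists_pair_of_one_lt_card hA
  obtain ⟨s₀, hs₀⟩ := Fintype.exists_ne_of_one_lt_card hS e
  let o : S → A := fun _ => a₀
  let n : S → S → A := fun s => update o s a₁
  let p : S → A := update (n s₀) e a₁
  let g : S → S → A := update n e p
  have hg : ∀ s, g s s = a₁ := by
    intro s
    by_cases hs : s = e
    · subst hs; simp [g, p]
    · simp [g, n, hs]
  have ho : o ∉ univ.image g := by
    simp only [mem_image, mem_univ, true_and, not_exists]
    exact fun s h => ha (by rw [← hg s, h])
  have hk' : k ≤ #(univ.image g)ᶜ := by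
    have := card_image_le (s := univ) (f := g)
    rw [card_compl]
    rw [card_univ] at this
    omega
  obtain ⟨T, hoT, hTg, hTk⟩ :=
    exists_subsuperset_card_eq (s := {o}) (by simpa using ho) (by rw [card_singleton]; omega) hk'
  have hgT : ∀ s, g s ∉ T := fun s h => by simpa using hTg h
  refine ⟨T, hTk, fun s hs => ⟨o, g s, fun t ht => ?_, ?_⟩, ⟨g s₀, g e, fun t ht => ?_, ?_, ?_⟩⟩
  · simp [g, n, hs, ht]
  · simpa [hgT s] using hoT
  · simp [g, n, p, hs₀, ht]
  · simpa [g, n, p, o, hs₀, hs₀.symm] using ha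
  · simp [hgT]

lemma exists_card_eq_cutsEdge_sparesEdge {e : S} {k : ℕ} (hA : 2 ≤ Fintype.card A)
    (hS : 2 ≤ Fintype.card S) (hk0 : 0 < k) (hk : k < Fintype.card (S → A)) :
    ∃ T : Finset (S → A), #T = k ∧ (∀ s, s ≠ e → CutsEdge T s) ∧ SparesEdge T e := by
  have hSN : 2 * Fintype.card S ≤ Fintype.card (S → A) := by
    rw [Fintype.card_fun]
    exact (Nat.mul_le_mul_right _ hA).trans (Nat.mul_le_pow (by omega) _)
  by_cases hsmall : k + Fintype.card S ≤ Fintype.card (S → A)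
  · exact exists_card_eq_cutsEdge_sparesEdge_of_add_card_le hA hS hk0 hsmall
  · obtain ⟨T, hTk, hcut, hspare⟩ := exists_card_eq_cutsEdge_sparesEdge_of_add_card_le
      (e := e) (k := Fintype.card (S → A) - k) hA hS (by omega) (by omega)
    refine ⟨Tᶜ, ?_, fun s hs => (hcut s hs).compl, hspare.compl⟩
    rw [card_compl, hTk]
    omega

end Hamming

section Twist

variable [Fintype S] [DecidableEq A]

def twistOn (T : Finset (S → A)) (σ : A → A) (e : S) (z : S → A) : A :=
  if z ∈ T then σ (z e) else z e

variable {T : Finset (S → A)} {σ : Equiv.Perm A} {e : S}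

lemma card_twistOn_ne (hσ : ∀ b, σ b ≠ b) :
    Nat.card {z : S → A // twistOn T σ e z ≠ z e} = #T := by
  have hiff : ∀ z, twistOn T σ e z ≠ z e ↔ z ∈ T := fun z => by
    by_cases hz : z ∈ T <;> simp [twistOn, hz, hσ]
  rw [Nat.card_congr (Equiv.subtypeEquivRight hiff), Nat.card_eq_finsetCard]

lemma CutsEdge.exists_twistOn_ne {s : S} (h : CutsEdge T s) (hs : s ≠ e) (hσ : ∀ b, σ b ≠ b) :
    ∃ z w : S → A, (∀ t, t ≠ s → z t = w t) ∧ twistOn T σ e z ≠ twistOn T σ e w := by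
  obtain ⟨z, w, hzw, hT⟩ := h
  refine ⟨z, w, hzw, ?_⟩
  have he : z e = w e := hzw e hs.symm
  by_cases hz : z ∈ T
  · simpa [twistOn, hz, hT.mp hz, he] using hσ (w e)
  · simpa [twistOn, hz, not_not.mp (hT.not.mp hz), he] using (hσ (w e)).symm

lemma SparesEdge.exists_twistOn_ne (h : SparesEdge T e) :
    ∃ z w : S → A, (∀ t, t ≠ e → z t = w t) ∧ twistOn T σ e z ≠ twistOn T σ e w := by
  obtain ⟨z, w, hzw, he, hT⟩ := h
  refine ⟨z, w, hzw, ?_⟩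
  by_cases hz : z ∈ T
  · simpa [twistOn, hz, hT.mp hz] using he
  · simpa [twistOn, hz, hT.not.mp hz] using he

end Twist

end

/-- For every `0 < k < |A|^{|S|}` there is a local map `μ : A^S → A` whose
minimal neighborhood is all of `S` and whose activity value is `k`. -/
theorem stmt11 (A S : Type*) [Fintype A] [Fintype S] [DecidableEq S]
    (hA : 2 ≤ Fintype.card A) (hS : 2 ≤ Fintype.card S) (e : S)
    (k : ℕ) (hk0 : 0 < k) (hk : k < Fintype.card A ^ Fintype.card S) :
    ∃ μ : (S → A) → A,
      (∀ s : S, ∃ z w : S → A, (∀ t, t ≠ s → z t = w t) ∧ μ z ≠ μ w) ∧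
      Nat.card {z : S → A // μ z ≠ z e} = k := by
  classical
  obtain ⟨σ, hσ⟩ := exists_perm_forall_apply_ne hA
  obtain ⟨T, hTk, hcut, hspare⟩ :=
    exists_card_eq_cutsEdge_sparesEdge (e := e) hA hS hk0 (by rwa [Fintype.card_fun])
  refine ⟨twistOn T σ e, fun s => ?_, hTk ▸ card_twistOn_ne hσ⟩
  rcases eq_or_ne s e with rfl | hs
  · exact hspare.exists_twistOn_ne
  · exact (hcut s hs).exists_twistOn_ne hs hσ
end

section
/- If |A| ≥ 3, there exists a local map μ : A^S → A whose minimal neighborhood is all of S and whose activity value equals |A|^{|S|} (i.e., every pattern is an active transition). -/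
/-- If `|A| ≥ 3`, there is a local map `μ : A^S → A` whose minimal neighborhood
is all of `S` and in which every pattern is an active transition, so that
`α(μ) = |A|^{|S|}`. -/
theorem stmt12 (A S : Type*) [Fintype A] [Fintype S] [DecidableEq S]
    (hA : 3 ≤ Fintype.card A) (hS : 2 ≤ Fintype.card S) (e : S) :
    ∃ μ : (S → A) → A,
      (∀ s : S, ∃ z w : S → A, (∀ t, t ≠ s → z t = w t) ∧ μ z ≠ μ w) ∧
      (∀ z : S → A, μ z ≠ z e) ∧
      Nat.card {z : S → A // μ z ≠ z e} = Fintype.card A ^ Fintype.card S := by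
  classical
  have hemb : Nonempty (Fin 3 ↪ A) := by
    rw [← Fintype.card_fin 3] at hA
    exact Function.Embedding.nonempty_of_card_le hA
  obtain ⟨f⟩ := hemb
  set a := f 0 with ha
  set b := f 1 with hb
  set c := f 2 with hc
  have hab : a ≠ b := fun h => by simpa using f.injective h
  have hac : a ≠ c := fun h => by simpa using f.injective h
  have hbc : b ≠ c := fun h => by simpa using f.injective h
  -- fixed-point-free maps
  set f0 : A → A := fun x => if x = a then b else a with hf0
  set f1 : A → A := fun x => if x = a then c else a with hf1
  have hf0ne : ∀ x, f0 x ≠ x := by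
    intro x; simp only [hf0]; split
    · subst ‹x = a›; exact hab.symm
    · intro h; exact ‹¬ x = a› h.symm
  have hf1ne : ∀ x, f1 x ≠ x := by
    intro x; simp only [hf1]; split
    · subst ‹x = a›; exact hac.symm
    · intro h; exact ‹¬ x = a› h.symm
  set μ : (S → A) → A :=
    fun z => if ∀ s, s ≠ e → z s = a then f0 (z e) else f1 (z e) with hμ
  refine ⟨μ, ?_, ?_, ?_⟩
  · intro s
    by_cases hs : s = e
    · -- change coordinate e: both patterns satisfy the predicate
      subst hs
      refine ⟨fun _ => a, Function.update (fun _ => a) s b, ?_, ?_⟩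
      · intro t ht; rw [Function.update_of_ne ht]
      · have hP1 : ∀ t, t ≠ s → (fun _ => a) t = a := fun _ _ => rfl
        have hP2 : ∀ t, t ≠ s → Function.update (fun _ : S => a) s b t = a := by
          intro t ht; rw [Function.update_of_ne ht]
        simp only [hμ, if_pos hP1, if_pos hP2, Function.update_self]
        simp only [hf0, if_pos rfl, if_neg hab.symm]
        exact hab.symm
    · -- change coordinate s ≠ e: predicate flips
      refine ⟨fun _ => a, Function.update (fun _ => a) s b, ?_, ?_⟩
      · intro t ht; rw [Function.update_of_ne ht]
      · have hP1 : ∀ t, t ≠ e → (fun _ => a) t = a := fun _ _ => rfl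
        have hP2 : ¬ ∀ t, t ≠ e → Function.update (fun _ : S => a) s b t = a := by
          intro h
          have := h s hs
          rw [Function.update_self] at this
          exact hab this.symm
        have he : Function.update (fun _ : S => a) s b e = a :=
          Function.update_of_ne (fun h => hs h.symm) _ _
        simp only [hμ, if_pos hP1, if_neg hP2, he]
        simp only [hf0, hf1, if_pos rfl]
        exact hbc
  · intro z
    simp only [hμ]
    split
    · exact hf0ne _
    · exact hf1ne _
  · have : ∀ z : S → A, μ z ≠ z e := by
      intro z
      simp only [hμ]
      split
      · exact hf0ne _
      · exact hf1ne _
    rw [Nat.card_congr (Equiv.subtypeUnivEquiv this), Nat.card_eq_fintype_card,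
      Fintype.card_fun]
end
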